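/- Under the assumption that at most d+1 lines intersect at any interior vertex of the Wang–Shi split Δ_{WS_d}, the dimension of the spline space S_d^{d-1}(Δ_{WS_d}) equals (d+2)(d+1)/2 + 3d(d-1), where 3d(d-1) is the number of interior lines in the complete graph on the 3d boundary points. -/
import Mathlib


/-- The vertex contribution `ς(l)` in the Chui–Wang cross-cut dimension formula,
for degree `d`, smoothness `r` and `l` crossing lines. -/
noncomputable def varsigma (d r l : ℕ) : ℝ :=
  (1 / 2) * max ((d : ℝ) - (r : ℝ) - (⌊((r : ℝ) + 1) / ((l : ℝ) - 1)⌋ : ℤ)) 0 *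
    (((l : ℝ) - 1) * (d : ℝ) - ((l : ℝ) + 1) * (r : ℝ) + ((l : ℝ) - 3) +
      ((l : ℝ) - 1) * (⌊((r : ℝ) + 1) / ((l : ℝ) - 1)⌋ : ℤ))

lemma varsigma_eq_zero (d l : ℕ) (hd : 1 ≤ d) (hl2 : 2 ≤ l) (hld : l ≤ d + 1) :
    varsigma d (d - 1) l = 0 := by
  unfold varsigma
  have hr : ((d - 1 : ℕ) : ℝ) = (d : ℝ) - 1 := by
    have : (1:ℕ) ≤ d := hd
    push_cast [this]; ring
  rw [hr]
  have h1 : (1 : ℝ) ≤ ((l : ℝ) - 1) := by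
    have : (2:ℝ) ≤ l := by exact_mod_cast hl2
    linarith
  have hfloor : (1 : ℤ) ≤ ⌊((d : ℝ) - 1 + 1) / ((l : ℝ) - 1)⌋ := by
    rw [Int.le_floor]
    push_cast
    rw [le_div_iff₀ (by linarith : (0:ℝ) < (l:ℝ) - 1)]
    have : (l : ℝ) ≤ (d : ℝ) + 1 := by exact_mod_cast hld
    linarith
  have hmax : max ((d : ℝ) - ((d : ℝ) - 1) - (⌊((d : ℝ) - 1 + 1) / ((l : ℝ) - 1)⌋ : ℤ)) 0 = 0 := by
    apply max_eq_right
    have : (1 : ℝ) ≤ (⌊((d : ℝ) - 1 + 1) / ((l : ℝ) - 1)⌋ : ℤ) := by exact_mod_cast hfloor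
    linarith
  rw [hmax]; ring

/-- the Wang–Shi split `Δ_{WS_d}` is a cross-cut partition with
`m = 3d(d-1)` interior cross-cut lines; assuming at most `d+1` lines meet at each
interior vertex (so each vertex multiplicity `m_k` satisfies `2 ≤ m_k ≤ d+1`),
the Chui–Wang dimension formula
`dim S^{d-1}_d = C(d+2,2) + m·C(d-(d-1)+1,2) + Σ_k ς(m_k)`
gives `dim S^{d-1}_d(Δ_{WS_d}) = (d+2)(d+1)/2 + 3d(d-1)`. -/
theorem dim_WangShi_spline_space (d : ℕ) (hd : 1 ≤ d)
    (N : ℕ) (mk : Fin N → ℕ)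
    (hmk : ∀ k, 2 ≤ mk k ∧ mk k ≤ d + 1)
    (dimS : ℕ)
    (hdim : (dimS : ℝ) =
      (Nat.choose (d + 2) 2 : ℝ) +
        ((3 * d * (d - 1) : ℕ) : ℝ) * (Nat.choose (d - (d - 1) + 1) 2 : ℝ) +
        ∑ k : Fin N, varsigma d (d - 1) (mk k)) :
    dimS = (d + 2) * (d + 1) / 2 + 3 * d * (d - 1) := by
  have hsum : ∑ k : Fin N, varsigma d (d - 1) (mk k) = 0 := by
    apply Finset.sum_eq_zero
    intro k _
    exact varsigma_eq_zero d (mk k) hd (hmk k).1 (hmk k).2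
  have h2 : d - (d - 1) + 1 = 2 := by omega
  rw [hsum, h2] at hdim
  rw [Nat.choose_self] at hdim
  norm_num at hdim
  have hc : Nat.choose (d + 2) 2 = (d + 2) * (d + 1) / 2 := by
    rw [Nat.choose_two_right]; congr 1
  have : dimS = Nat.choose (d + 2) 2 + 3 * d * (d - 1) := by
    exact_mod_cast hdim
  omega
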